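/- Let d ≥ 3 be an integer and let A = { x ∈ [0,1/2]^d : ‖x‖₂ ≤ 1/π }. Then 2^d · ∫_A 1/(2d − 2·Σ_{i=1}^d cos(2π x_i)) dx ≤ 3 / (4·π^{d/2}·Γ(d/2)), where Γ is the Gamma function. -/

import Mathlib

/-!
On the ball of radius `1/π` the bound `cos t ≤ 1 - t²/2 + t⁴/24` gives
`2 - 2 cos (2π xᵢ) ≥ 4π² xᵢ² - (4π⁴/3) xᵢ⁴`; summing and using `∑ xᵢ⁴ ≤ ‖x‖⁴ ≤ ‖x‖²/π²`, the
integrand is at most `3 / (8π² ‖x‖²)`. The region lies in the positive orthant, and this radial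
bound is invariant under the coordinate reflections, so its integral over the orthant is `2⁻ᵈ`
times its integral over the whole ball. In polar coordinates the latter is
`3/(8π²) · d ωᵈ · π^(2-d)/(d-2)` with `ωᵈ = π^(d/2) / Γ(d/2 + 1)` the volume of the unit ball,
that is `3 / (4 π^(d/2) Γ(d/2) (d - 2)) ≤ 3 / (4 π^(d/2) Γ(d/2))`.
-/

open Real MeasureTheory Set Metric Module

theorem Real.cos_le_one_sub_sq_div_two_add_pow_four_div (x : ℝ) :
    cos x ≤ 1 - x ^ 2 / 2 + x ^ 4 / 24 := by
  wlog hx : 0 ≤ x generalizing x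
  · have := this (-x) (by linarith)
    rwa [cos_neg, neg_sq, show (-x) ^ 4 = x ^ 4 by ring] at this
  have hsin := sin_ge_sub_cube (x := x / 2) (by positivity)
  have hcos : cos x = 1 - 2 * sin (x / 2) ^ 2 := by
    have h := cos_two_mul (x / 2)
    rw [mul_div_cancel₀ x two_ne_zero, cos_sq'] at h
    linarith
  rw [hcos]
  rcases le_or_gt 0 (x / 2 - (x / 2) ^ 3 / 6) with h | h
  · nlinarith [pow_le_pow_left₀ h hsin 2, pow_nonneg hx 6]
  -- otherwise `x ^ 2 > 24`, so the right-hand side exceeds `1`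
  · nlinarith [sq_nonneg (sin (x / 2)), mul_nonneg hx hx, mul_nonpos_of_nonneg_of_nonpos hx h.le]

theorem two_card_sub_two_sum_cos_nonneg {ι : Type*} [Fintype ι] (θ : ι → ℝ) :
    0 ≤ 2 * Fintype.card ι - 2 * ∑ i, cos (θ i) := by
  have := Finset.sum_le_sum fun i (_ : i ∈ Finset.univ) => cos_le_one (θ i)
  simp only [Finset.sum_const, Finset.card_univ, nsmul_eq_mul, mul_one] at this
  linarith

namespace EuclideanSpace

variable {ι : Type*} [Fintype ι]

theorem norm_sq_sub_pow_four_div_le_sum_two_sub_two_cos (y : EuclideanSpace ℝ ι) :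
    ‖y‖ ^ 2 - ‖y‖ ^ 4 / 12 ≤ ∑ i, (2 - 2 * cos (y i)) := by
  have hnorm : ‖y‖ ^ 2 = ∑ i, y i ^ 2 := by simp [EuclideanSpace.norm_sq_eq]
  have hquartic : ∑ i, y i ^ 4 ≤ ‖y‖ ^ 4 := by
    rw [show ‖y‖ ^ 4 = (‖y‖ ^ 2) ^ 2 by ring, hnorm]
    simpa only [← pow_mul] using Finset.sum_sq_le_sq_sum_of_nonneg fun i _ => sq_nonneg (y i)
  calc ‖y‖ ^ 2 - ‖y‖ ^ 4 / 12 ≤ ∑ i, (y i ^ 2 - y i ^ 4 / 12) := by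
        rw [Finset.sum_sub_distrib, ← Finset.sum_div, hnorm]; linarith
    _ ≤ ∑ i, (2 - 2 * cos (y i)) := Finset.sum_le_sum fun i _ => by
        linarith [cos_le_one_sub_sq_div_two_add_pow_four_div (y i)]

theorem one_div_two_card_sub_two_sum_cos_le_inv {x : EuclideanSpace ℝ ι} (hx : ‖x‖ ≤ 1 / π) :
    1 / (2 * Fintype.card ι - 2 * ∑ i, cos (2 * π * x i)) ≤ (8 * π ^ 2 / 3 * ‖x‖ ^ 2)⁻¹ := by
  have hsum : 2 * (Fintype.card ι : ℝ) - 2 * ∑ i, cos (2 * π * x i) =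
      ∑ i, (2 - 2 * cos (((2 * π) • x) i)) := by
    simp [Finset.sum_sub_distrib, Finset.mul_sum, mul_comm]
  have hscaled := norm_sq_sub_pow_four_div_le_sum_two_sub_two_cos ((2 * π) • x)
  rw [norm_smul, Real.norm_of_nonneg (by positivity)] at hscaled
  have hsmall : (2 * π * ‖x‖) ^ 2 ≤ 4 := by
    have : π * ‖x‖ ≤ 1 := by rwa [le_div_iff₀' pi_pos] at hx
    nlinarith [mul_nonneg pi_pos.le (norm_nonneg x)]
  have hlow : 8 * π ^ 2 / 3 * ‖x‖ ^ 2 ≤ 2 * Fintype.card ι - 2 * ∑ i, cos (2 * π * x i) := by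
    rw [hsum]
    nlinarith [hscaled, hsmall, sq_nonneg (2 * π * ‖x‖)]
  rcases (norm_nonneg x).eq_or_lt with h0 | hpos
  -- at `x = 0` both sides are `0`, by `1 / 0 = 0` and `0⁻¹ = 0`
  · simp [norm_eq_zero.1 h0.symm]
  · rw [one_div]
    exact inv_anti₀ (by positivity) hlow

theorem measureReal_ball_zero_one [Nonempty ι] :
    volume.real (ball (0 : EuclideanSpace ℝ ι) 1) =
      √π ^ Fintype.card ι / Gamma (Fintype.card ι / 2 + 1) := by
  rw [Measure.real, volume_ball, ENNReal.ofReal_one, one_pow, one_mul,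
    ENNReal.toReal_ofReal (by positivity)]

theorem ae_coord_ne_zero (k : ι) : ∀ᵐ x : EuclideanSpace ℝ ι, x k ≠ 0 := by
  simp only [ae_iff, ne_eq, not_not]
  rw [← (PiLp.volume_preserving_toLp ι).measure_preimage (by measurability)]
  exact Measure.pi_hyperplane _ k 0

variable [DecidableEq ι]

noncomputable def reflectCoord (k : ι) :
    EuclideanSpace ℝ ι ≃ₗᵢ[ℝ] EuclideanSpace ℝ ι :=
  LinearIsometryEquiv.piLpCongrRight 2 fun i =>
    if i = k then LinearIsometryEquiv.neg ℝ else LinearIsometryEquiv.refl ℝ ℝ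

theorem reflectCoord_apply (k : ι) (x : EuclideanSpace ℝ ι) (i : ι) :
    reflectCoord k x i = if i = k then -x i else x i := by
  simp [reflectCoord, LinearIsometryEquiv.piLpCongrRight_apply, apply_ite]
  split_ifs <;> rfl

variable {E : Type*} [NormedAddCommGroup E] [NormedSpace ℝ E] {F : EuclideanSpace ℝ ι → E}

theorem setIntegral_eq_two_smul_setIntegral_inter_coord_nonneg {t : Set (EuclideanSpace ℝ ι)}
    (k : ι) (hF : IntegrableOn F t) (hFk : ∀ x, F (reflectCoord k x) = F x)
    (htk : reflectCoord k ⁻¹' t = t) :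
    ∫ x in t, F x = (2 : ℝ) • ∫ x in t ∩ {x | 0 ≤ x k}, F x := by
  have hneg : t \ {x | 0 ≤ x k} = reflectCoord k ⁻¹' (t ∩ {x | 0 < x k}) := by
    ext x
    simp [preimage_inter, htk, reflectCoord_apply]
  have hreflect : ∫ x in reflectCoord k ⁻¹' (t ∩ {x | 0 < x k}), F x =
      ∫ x in t ∩ {x | 0 < x k}, F x := by
    simpa only [hFk] using (reflectCoord k).measurePreserving.setIntegral_preimage_emb
      (reflectCoord k).toHomeomorph.measurableEmbedding F _
  have hpos : (t ∩ {x | 0 < x k} : Set (EuclideanSpace ℝ ι)) =ᵐ[volume]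
      (t ∩ {x | 0 ≤ x k} : Set (EuclideanSpace ℝ ι)) := by
    refine (ae_eq_refl t).inter ?_
    filter_upwards [ae_coord_ne_zero k] with x hx
    exact propext ⟨le_of_lt, fun h => h.lt_of_ne' hx⟩
  have hmeas : MeasurableSet {x : EuclideanSpace ℝ ι | 0 ≤ x k} :=
    measurableSet_le measurable_const (by fun_prop)
  rw [← integral_inter_add_sdiff hmeas hF, hneg,
    hreflect, setIntegral_congr_set hpos, two_smul]

theorem integral_eq_two_pow_card_smul_setIntegral_nonneg_on (hF : Integrable F)
    (hFk : ∀ k x, F (reflectCoord k x) = F x) (s : Finset ι) :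
    ∫ x, F x = (2 : ℝ) ^ s.card • ∫ x in {x | ∀ i ∈ s, 0 ≤ x i}, F x := by
  induction s using Finset.induction_on with
  | empty => simp
  | insert k s hks ih =>
    have hinv : reflectCoord k ⁻¹' {x | ∀ i ∈ s, 0 ≤ x i} = {x | ∀ i ∈ s, 0 ≤ x i} := by
      ext x
      simp only [mem_preimage, mem_ofPred_eq, reflectCoord_apply]
      exact forall₂_congr fun i hi => by rw [if_neg (ne_of_mem_of_not_mem hi hks)]
    have hset : {x : EuclideanSpace ℝ ι | ∀ i ∈ insert k s, 0 ≤ x i} =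
        {x | ∀ i ∈ s, 0 ≤ x i} ∩ {x | 0 ≤ x k} := by
      ext x
      simp [and_comm]
    rw [ih, setIntegral_eq_two_smul_setIntegral_inter_coord_nonneg k hF.integrableOn (hFk k) hinv,
      hset, smul_smul, Finset.card_insert_of_notMem hks, pow_succ]

theorem integral_eq_two_pow_smul_setIntegral_nonneg (hF : Integrable F)
    (hFk : ∀ k x, F (reflectCoord k x) = F x) :
    ∫ x, F x = (2 : ℝ) ^ Fintype.card ι • ∫ x in {x | ∀ i, 0 ≤ x i}, F x := by
  simpa using integral_eq_two_pow_card_smul_setIntegral_nonneg_on hF hFk Finset.univ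

end EuclideanSpace

theorem pow_mul_indicator_Iic_inv_sq (m : ℕ) (r : ℝ) {y : ℝ} (hy : 0 < y) :
    y ^ (m + 2) * (Iic r).indicator (fun y => (y ^ 2)⁻¹) y = (Ioc 0 r).indicator (· ^ m) y := by
  by_cases hyr : y ≤ r
  · simp only [indicator_of_mem (show y ∈ Iic r from hyr),
      indicator_of_mem (show y ∈ Ioc 0 r from ⟨hy, hyr⟩)]
    field_simp
    ring
  · simp [indicator_of_notMem (show y ∉ Iic r from hyr),
      indicator_of_notMem (show y ∉ Ioc 0 r from fun h => hyr h.2)]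

theorem indicator_closedBall_inv_norm_sq {E : Type*} [SeminormedAddCommGroup E] (r : ℝ) (x : E) :
    (closedBall (0 : E) r).indicator (fun x => (‖x‖ ^ 2)⁻¹) x =
      (Iic r).indicator (fun y => (y ^ 2)⁻¹) ‖x‖ := by
  simp [indicator]

section Radial

variable {E : Type*} [NormedAddCommGroup E] [NormedSpace ℝ E] [FiniteDimensional ℝ E]
  [MeasurableSpace E] [BorelSpace E] (μ : Measure E) [μ.IsAddHaarMeasure]

theorem integrable_indicator_closedBall_inv_norm_sq (hE : 2 < finrank ℝ E) (r : ℝ) :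
    Integrable ((closedBall (0 : E) r).indicator fun x => (‖x‖ ^ 2)⁻¹) μ := by
  have : Nontrivial E := Module.nontrivial_of_finrank_pos (R := ℝ) (by omega)
  obtain ⟨m, hm⟩ : ∃ m, finrank ℝ E = m + 3 := ⟨finrank ℝ E - 3, by omega⟩
  simp_rw [funext (indicator_closedBall_inv_norm_sq r)]
  rw [integrable_fun_norm_addHaar μ, hm]
  refine (integrableOn_congr_fun (fun y hy => (pow_mul_indicator_Iic_inv_sq _ r hy).symm)
    measurableSet_Ioi).1 ?_
  exact ((integrable_indicator_iff measurableSet_Ioc).2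
    (continuous_pow m).integrableOn_Ioc).integrableOn

theorem integral_indicator_closedBall_inv_norm_sq (hE : 2 < finrank ℝ E) {r : ℝ} (hr : 0 ≤ r) :
    ∫ x, (closedBall (0 : E) r).indicator (fun x => (‖x‖ ^ 2)⁻¹) x ∂μ =
      finrank ℝ E * μ.real (ball 0 1) * (r ^ (finrank ℝ E - 2) / (finrank ℝ E - 2)) := by
  have : Nontrivial E := Module.nontrivial_of_finrank_pos (R := ℝ) (by omega)
  obtain ⟨m, hm⟩ : ∃ m, finrank ℝ E = m + 3 := ⟨finrank ℝ E - 3, by omega⟩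
  simp_rw [indicator_closedBall_inv_norm_sq r]
  rw [integral_fun_norm_addHaar μ, hm, show m + 3 - 1 = m + 2 by omega,
    show m + 3 - 2 = m + 1 by omega]
  simp only [smul_eq_mul, nsmul_eq_mul]
  rw [setIntegral_congr_fun measurableSet_Ioi (fun y hy => pow_mul_indicator_Iic_inv_sq _ r hy),
    setIntegral_indicator measurableSet_Ioc, inter_eq_right.2 Ioc_subset_Ioi_self,
    ← intervalIntegral.integral_of_le hr, integral_pow]
  push_cast
  ring

end Radial

theorem inv_mul_mul_sqrt_pi_pow_div_Gamma_mul_le {d : ℕ} (hd : 3 ≤ d) :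
    (8 * π ^ 2 / 3)⁻¹ * (d * (√π ^ d / Gamma (d / 2 + 1)) * ((1 / π) ^ (d - 2) / (d - 2))) ≤
      3 / (4 * π ^ ((d : ℝ) / 2) * Gamma ((d : ℝ) / 2)) := by
  obtain ⟨m, rfl⟩ : ∃ m, d = m + 3 := ⟨d - 3, by omega⟩
  set P := π ^ (((m + 3 : ℕ) : ℝ) / 2)
  have hsqrt : √π ^ (m + 3) = P := by
    rw [sqrt_eq_rpow, ← rpow_natCast, ← rpow_mul pi_pos.le, one_div_mul_eq_div]
  have hP : P * P = π ^ (m + 1) * π ^ 2 := by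
    rw [← rpow_add pi_pos, ← pow_add, ← rpow_natCast]
    congr 1
    push_cast
    ring
  have hΓ : Gamma ((m + 3 : ℕ) / 2 + 1) = (m + 3 : ℕ) / 2 * Gamma ((m + 3 : ℕ) / 2) :=
    Gamma_add_one (by positivity)
  have hΓpos : 0 < Gamma (((m + 3 : ℕ) : ℝ) / 2) := Gamma_pos_of_pos (by positivity)
  have hPpos : 0 < P := by positivity
  rw [show m + 3 - 2 = m + 1 by omega, hsqrt, hΓ]
  calc _ = 3 / (4 * P * Gamma (((m + 3 : ℕ) : ℝ) / 2)) / (m + 1) := by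
        field_simp
        rw [sq, hP, one_div_pow, show ((m + 3 : ℕ) : ℝ) - 2 = m + 1 by push_cast; ring]
        field_simp
        norm_num
    _ ≤ _ := div_le_self (by positivity) (by linarith [(m.cast_nonneg : (0 : ℝ) ≤ m)])

theorem integral_regionA_upper (d : ℕ) (hd : 3 ≤ d) :
    (2 : ℝ) ^ d * ∫ x in {x : EuclideanSpace ℝ (Fin d) |
        (∀ i, x i ∈ Set.Icc (0 : ℝ) (1/2)) ∧ ‖x‖ ≤ 1 / Real.pi},
        1 / (2 * d - 2 * ∑ i, Real.cos (2 * Real.pi * x i))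
      ≤ 3 / (4 * Real.pi ^ ((d : ℝ) / 2) * Real.Gamma ((d : ℝ) / 2)) := by
  set A := {x : EuclideanSpace ℝ (Fin d) | (∀ i, x i ∈ Icc (0 : ℝ) (1/2)) ∧ ‖x‖ ≤ 1 / π}
  set G : EuclideanSpace ℝ (Fin d) → ℝ := fun x =>
    (8 * π ^ 2 / 3)⁻¹ * (closedBall 0 (1 / π)).indicator (fun x => (‖x‖ ^ 2)⁻¹) x
  have hdim : 2 < finrank ℝ (EuclideanSpace ℝ (Fin d)) := by simp; omega
  have hG : Integrable G := (integrable_indicator_closedBall_inv_norm_sq volume hdim _).const_mul _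
  have hfG : ∀ x ∈ A, 1 / (2 * d - 2 * ∑ i, cos (2 * π * x i)) ≤ G x := fun x hx => by
    simp only [G, indicator_of_mem (mem_closedBall_zero_iff.2 hx.2), ← mul_inv]
    simpa using EuclideanSpace.one_div_two_card_sub_two_sum_cos_le_inv hx.2
  calc (2 : ℝ) ^ d * ∫ x in A, 1 / (2 * d - 2 * ∑ i, cos (2 * π * x i))
      ≤ (2 : ℝ) ^ d * ∫ x in A, G x := by
        refine mul_le_mul_of_nonneg_left ?_ (by positivity)
        refine integral_mono_of_nonneg (ae_of_all _ fun x => ?_) hG.integrableOn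
          (ae_restrict_of_forall_mem (by measurability) hfG)
        simpa using one_div_nonneg.2 (two_card_sub_two_sum_cos_nonneg fun i => 2 * π * x i)
    _ ≤ (2 : ℝ) ^ d * ∫ x in {x | ∀ i, 0 ≤ x i}, G x := by
        refine mul_le_mul_of_nonneg_left ?_ (by positivity)
        exact setIntegral_mono_set hG.integrableOn
          (ae_of_all _ fun x => mul_nonneg (by positivity) (indicator_nonneg (by simp) _))
          (ae_of_all _ fun x hx i => (hx.1 i).1)
    _ = ∫ x, G x := by
        rw [EuclideanSpace.integral_eq_two_pow_smul_setIntegral_nonneg hG fun k x => by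
          simp only [G, indicator, mem_closedBall_zero_iff, LinearIsometryEquiv.norm_map],
          smul_eq_mul, Fintype.card_fin]
    _ = (8 * π ^ 2 / 3)⁻¹ * (d * (√π ^ d / Gamma (d / 2 + 1)) * ((1 / π) ^ (d - 2) / (d - 2))) := by
        have : NeZero d := ⟨by omega⟩
        rw [integral_const_mul,
          integral_indicator_closedBall_inv_norm_sq volume hdim (by positivity),
          finrank_euclideanSpace_fin, EuclideanSpace.measureReal_ball_zero_one, Fintype.card_fin]
    _ ≤ _ := inv_mul_mul_sqrt_pi_pow_div_Gamma_mul_le hd
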